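/- Work with a finite oriented multigraph given by finite types V (vertices) and E (edges) together with maps s t : E → V. Assume the multigraph has trivial cycle space, i.e., every x : E → ℤ with ∂.mulVec x = 0 satisfies x = 0. Let p be a natural number, let θ : Equiv.Perm V satisfy θ ^ p = 1, and let M : Matrix E E ℤ be a chain map over θ. Then M ^ p = 1 (the identity matrix). -/

import Mathlib

/-- The boundary matrix of a finite oriented multigraph with source map `s`
and target map `t`: `∂ v e = [v = t e] - [v = s e]`. -/
def boundaryMatrix {V E : Type*} [DecidableEq V] (s t : E → V) : Matrix V E ℤ :=
  fun v e => (if v = t e then 1 else 0) - (if v = s e then 1 else 0)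

/-- The permutation matrix of `θ`: `P_θ u w = [u = θ w]`. -/
def permMatrix {V : Type*} [DecidableEq V] (θ : Equiv.Perm V) : Matrix V V ℤ :=
  fun u w => if u = θ w then 1 else 0

/-- `M` is a chain map over the vertex permutation `θ`: `∂ * M = P_θ * ∂`. -/
def IsChainMap {V E : Type*} [DecidableEq V] [Fintype V] [Fintype E]
    (s t : E → V) (θ : Equiv.Perm V) (M : Matrix E E ℤ) : Prop :=
  boundaryMatrix s t * M = permMatrix θ * boundaryMatrix s t

/-- `M` is HTC (homotopic-to-a-constant-map condition): `M` annihilates the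
cycle space, i.e. the kernel of the boundary matrix. -/
def IsHTC {V E : Type*} [DecidableEq V] [Fintype E]
    (s t : E → V) (M : Matrix E E ℤ) : Prop :=
  ∀ x : E → ℤ, (boundaryMatrix s t).mulVec x = 0 → M.mulVec x = 0

/-- The multigraph has no loops: `s e ≠ t e` for every edge. -/
def NoLoops {V E : Type*} (s t : E → V) : Prop :=
  ∀ e : E, s e ≠ t e

/-- The multigraph is connected: the smallest equivalence relation relating
`s e` and `t e` for every edge `e` is the total relation. -/
def IsConn {V E : Type*} (s t : E → V) : Prop :=
  ∀ u v : V, Relation.EqvGen (fun a b => ∃ e : E, s e = a ∧ t e = b) u v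

/-!
Chain maps compose, so `M ^ p` is a chain map over `θ ^ p = 1`, i.e. `∂ * M ^ p = ∂`.
With trivial cycle space `∂` is injective on chains and hence left-cancellable, so `M ^ p = 1`.
-/

section PermMatrix

variable {V : Type*} [DecidableEq V]

lemma permMatrix_one : permMatrix (1 : Equiv.Perm V) = 1 := by
  ext u w
  simp only [permMatrix, Matrix.one_apply, Equiv.Perm.one_apply]
  congr -- the two sides differ only in their `Decidable` instances

lemma permMatrix_mul [Fintype V] (θ σ : Equiv.Perm V) :
    permMatrix (θ * σ) = permMatrix θ * permMatrix σ := by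
  ext u w
  simp only [permMatrix, Equiv.Perm.coe_mul, Function.comp_apply, Matrix.mul_apply, mul_ite,
    mul_one, mul_zero, Finset.sum_ite_eq', Finset.mem_univ, if_true]
  congr

end PermMatrix

namespace IsChainMap

variable {V E : Type*} [DecidableEq V] [Fintype V] [Fintype E] {s t : E → V}

lemma one [DecidableEq E] : IsChainMap s t 1 1 := by
  rw [IsChainMap, Matrix.mul_one, permMatrix_one, Matrix.one_mul]

lemma mul {θ σ : Equiv.Perm V} {M N : Matrix E E ℤ}
    (hM : IsChainMap s t θ M) (hN : IsChainMap s t σ N) :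
    IsChainMap s t (θ * σ) (M * N) := by
  rw [IsChainMap, ← Matrix.mul_assoc, hM, Matrix.mul_assoc, hN, ← Matrix.mul_assoc,
    permMatrix_mul]

lemma pow [DecidableEq E] {θ : Equiv.Perm V} {M : Matrix E E ℤ} (hM : IsChainMap s t θ M) :
    ∀ n : ℕ, IsChainMap s t (θ ^ n) (M ^ n)
  | 0 => one
  | n + 1 => by simpa only [pow_succ] using (hM.pow n).mul hM

end IsChainMap

lemma Matrix.mul_left_cancel_of_mulVec_injective {l m n R : Type*} [Fintype m] [NonUnitalNonAssocSemiring R]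
    {A : Matrix l m R} (hA : Function.Injective A.mulVec) {B C : Matrix m n R}
    (h : A * B = A * C) : B = C :=
  Matrix.ext_col fun j => hA congr(($h).col j)

theorem pow_eq_one_of_trivial_cycle_space
    {V E : Type*} [Fintype V] [DecidableEq V] [Fintype E] [DecidableEq E]
    (s t : E → V)
    (htriv : ∀ x : E → ℤ, (boundaryMatrix s t).mulVec x = 0 → x = 0)
    (p : ℕ) (θ : Equiv.Perm V) (hθ : θ ^ p = 1)
    (M : Matrix E E ℤ) (hM : IsChainMap s t θ M) :
    M ^ p = 1 := by
  have hinj : Function.Injective (boundaryMatrix s t).mulVec :=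
    (injective_iff_map_eq_zero (boundaryMatrix s t).mulVecLin).2 htriv
  have hpow : IsChainMap s t 1 (M ^ p) := hθ ▸ hM.pow p
  refine Matrix.mul_left_cancel_of_mulVec_injective hinj ?_
  rw [hpow, permMatrix_one, Matrix.one_mul, Matrix.mul_one]
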